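/- Translation correctness for innermost scope (Theorem 2(a)): for every formula φ, state ω, and agent i, (M, ω, i) ⊨^in φ iff (M_c, ω) ⊨ φ_i^in, where the translation is: p_i^in = (p,i); (ψ ∧ ψ')_i^in = ψ_i^in ∧ ψ'_i^in; (¬ψ)_i^in = ¬(ψ_i^in); (a₁pr_j(φ₁)+...+a_k pr_j(φ_k) ≥ b)_i^in = a₁pr_j((φ₁)_j^in)+...+a_k pr_j((φ_k)_j^in) ≥ b (note the inner translations use j, not i); and (C_G ψ)_i^in = C_G(∧_{j∈G} B_j ψ_j^in). -/

import Mathlib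

/-!
Induction on the formula. Since `M_c` shares the partitions and measures of `M`, the belief
operators of the two structures coincide, and every case except common belief is immediate.
For `C_G ψ`, the translation asserts common belief of `T = ⋀_{j∈G} B_j ψ_j^in`, i.e. membership
in every iterate `E_G^{k+1} T`, whereas innermost semantics asks for every `E_G^k T`. These agree
because `E_G T ⊆ T`: an agent who believes `T` with probability one believes, in particular,
that she believes `ψ_j^in`, and beliefs are constant on her cells.
-/

open scoped ENNReal

/-- Formulas of the language `L_n^C(Φ)`: primitive propositions, negation, conjunction,
linear probability formulas `a₁ pr_j(φ₁) + ... + a_k pr_j(φ_k) ≥ b`, and common belief. -/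
inductive Formula (Φ N : Type) : Type where
  | tru : Formula Φ N
  | prim : Φ → Formula Φ N
  | neg : Formula Φ N → Formula Φ N
  | and : Formula Φ N → Formula Φ N → Formula Φ N
  | prob : N → (k : ℕ) → (Fin k → ℚ) → (Fin k → Formula Φ N) → ℚ → Formula Φ N
  | cb : Finset N → Formula Φ N → Formula Φ N

/-- An epistemic probability structure (with discrete probability measures) satisfying
A1–A4: a partition `part i` for each player, a discrete probability measure `mu i ω`
supported on the cell `part i ω` (A1), constant on cells (A2), and an interpretation
`interp i` of primitive propositions for each player.  (A3, A4 are automatic since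
all sets are measurable for discrete measures.) -/
structure EPS (Ω Φ N : Type) where
  part : N → Ω → Set Ω
  mu : N → Ω → Ω → ℝ≥0∞
  interp : N → Ω → Φ → Prop
  mem_part : ∀ i ω, ω ∈ part i ω
  part_cell : ∀ i ω ω', ω' ∈ part i ω → part i ω' = part i ω
  mu_prob : ∀ i ω, ∑' ω', mu i ω ω' = 1
  mu_supp : ∀ i ω ω', ω' ∉ part i ω → mu i ω ω' = 0
  mu_const : ∀ i ω ω', ω' ∈ part i ω → mu i ω' = mu i ω

namespace EPS

variable {Ω Φ N : Type}

/-- The measure `μ_{j,ω}(S)` of a set `S`. -/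
noncomputable def mval (M : EPS Ω Φ N) (j : N) (ω : Ω) (S : Set Ω) : ℝ≥0∞ :=
  ∑' x : S, M.mu j ω x

/-- The semantic belief operator: `ω ∈ Bset j S` iff `μ_{j,ω}(S ∩ Π_j(ω)) = 1`. -/
def Bset (M : EPS Ω Φ N) (j : N) (S : Set Ω) : Set Ω :=
  {ω | M.mval j ω (S ∩ M.part j ω) = 1}

/-- The semantic mutual-belief operator for the group `G`. -/
def Eset (M : EPS Ω Φ N) (G : Finset N) (S : Set Ω) : Set Ω :=
  ⋂ j ∈ G, M.Bset j S

/-- Iterates of the mutual-belief operator. -/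
def EIter (M : EPS Ω Φ N) (G : Finset N) : ℕ → Set Ω → Set Ω
  | 0, S => S
  | k + 1, S => M.Eset G (M.EIter G k S)

/-- Outermost-scope semantics: `[[φ]]^ou_i = {ω : (M,ω,i) ⊨^ou φ}`.  Probability
formulas for agent `j` are evaluated using `j`'s measure applied to the *outer*
agent `i`'s interpretation of the inner formulas. -/
def satOu (M : EPS Ω Φ N) : Formula Φ N → N → Set Ω
  | .tru, _ => Set.univ
  | .prim p, i => {ω | M.interp i ω p}
  | .neg φ, i => (M.satOu φ i)ᶜ
  | .and φ ψ, i => M.satOu φ i ∩ M.satOu ψ i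
  | .prob j _ a φs b, i =>
      {ω | (b : ℝ) ≤ ∑ m, (a m : ℝ) * (M.mval j ω (M.satOu (φs m) i ∩ M.part j ω)).toReal}
  | .cb G φ, i => ⋂ k : ℕ, M.EIter G k (M.Eset G (M.satOu φ i))

/-- Innermost-scope semantics: `[[φ]]^in_i = {ω : (M,ω,i) ⊨^in φ}`.  Probability
formulas for agent `j` are evaluated using `j`'s measure applied to `j`'s *own*
interpretation of the inner formulas. -/
def satIn (M : EPS Ω Φ N) : Formula Φ N → N → Set Ω
  | .tru, _ => Set.univ
  | .prim p, i => {ω | M.interp i ω p}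
  | .neg φ, i => (M.satIn φ i)ᶜ
  | .and φ ψ, i => M.satIn φ i ∩ M.satIn ψ i
  | .prob j _ a φs b, _ =>
      {ω | (b : ℝ) ≤ ∑ m, (a m : ℝ) * (M.mval j ω (M.satIn (φs m) j ∩ M.part j ω)).toReal}
  | .cb G φ, _ => ⋂ k : ℕ, M.EIter G k (⋂ j ∈ G, M.Bset j (M.satIn φ j))

end EPS

/-- `B_j φ`, an abbreviation for `pr_j(φ) ≥ 1` (equivalently `pr_j(φ) = 1`). -/
def Bf {Φ N : Type} (j : N) (φ : Formula Φ N) : Formula Φ N :=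
  .prob j 1 (fun _ => 1) (fun _ => φ) 1

/-- Conjunction of a list of formulas. -/
def bigAnd {Φ N : Type} (l : List (Formula Φ N)) : Formula Φ N :=
  l.foldr .and .tru

/-- The mutual-belief formula `E_G φ = ⋀_{j ∈ G} B_j φ`. -/
noncomputable def Ef {Φ N : Type} (G : Finset N) (φ : Formula Φ N) : Formula Φ N :=
  bigAnd (G.toList.map (fun j => Bf j φ))

/-- The innermost-scope translation `φ ↦ φ_i^in` into the language over `Φ × N`:
probability operators `pr_j` translate their inner formulas with `j` (not `i`), and
`(C_G ψ)_i^in = C_G (⋀_{j∈G} B_j ψ_j^in)`. -/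
noncomputable def trIn {Φ N : Type} (i : N) : Formula Φ N → Formula (Φ × N) N
  | .tru => .tru
  | .prim p => .prim (p, i)
  | .neg φ => .neg (trIn i φ)
  | .and φ ψ => .and (trIn i φ) (trIn i ψ)
  | .prob j k a φs b => .prob j k a (fun m => trIn j (φs m)) b
  | .cb G φ => .cb G (bigAnd (G.toList.map (fun j => Bf j (trIn j φ))))
termination_by structural φ => φ

namespace EPS

variable {Ω Φ Φ' N : Type}

lemma mval_le_one (M : EPS Ω Φ N) (j : N) (ω : Ω) (S : Set Ω) : M.mval j ω S ≤ 1 := by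
  rw [← M.mu_prob j ω, mval, tsum_subtype]
  exact ENNReal.tsum_le_tsum fun x => Set.indicator_le_self S _ x

lemma nonempty_of_mval_eq_one (M : EPS Ω Φ N) {j : N} {ω : Ω} {S : Set Ω}
    (h : M.mval j ω S = 1) : S.Nonempty := by
  rw [Set.nonempty_iff_ne_empty]
  rintro rfl
  simp [mval] at h

lemma mem_Bset_iff_one_le_toReal (M : EPS Ω Φ N) (j : N) (ω : Ω) (S : Set Ω) :
    ω ∈ M.Bset j S ↔ (1 : ℝ) ≤ (M.mval j ω (S ∩ M.part j ω)).toReal := by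
  have hle := M.mval_le_one j ω (S ∩ M.part j ω)
  rw [← ENNReal.toReal_one, ENNReal.toReal_le_toReal ENNReal.one_ne_top (ne_top_of_le_ne_top
    ENNReal.one_ne_top hle)]
  exact ⟨ge_of_eq, hle.antisymm⟩

lemma mem_Bset_iff_of_mem_part (M : EPS Ω Φ N) {j : N} {ω ω' : Ω} (h : ω' ∈ M.part j ω)
    (S : Set Ω) : ω' ∈ M.Bset j S ↔ ω ∈ M.Bset j S := by
  change M.mval j ω' _ = 1 ↔ M.mval j ω _ = 1
  rw [M.part_cell j ω ω' h, mval, M.mu_const j ω ω' h, mval]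

lemma Bset_subset_of_subset_Bset (M : EPS Ω Φ N) {j : N} {S A : Set Ω}
    (h : S ⊆ M.Bset j A) : M.Bset j S ⊆ M.Bset j A := fun ω hω => by
  obtain ⟨x, hxS, hxω⟩ := M.nonempty_of_mval_eq_one hω
  exact (M.mem_Bset_iff_of_mem_part hxω A).1 (h hxS)

lemma Eset_iInter_Bset_subset (M : EPS Ω Φ N) (G : Finset N) (A : N → Set Ω) :
    M.Eset G (⋂ j ∈ G, M.Bset j (A j)) ⊆ ⋂ j ∈ G, M.Bset j (A j) := by
  refine Set.subset_iInter₂ fun j hj => ?_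
  exact (Set.biInter_subset_of_mem hj).trans
    (M.Bset_subset_of_subset_Bset (Set.biInter_subset_of_mem hj))

lemma EIter_Eset (M : EPS Ω Φ N) (G : Finset N) (k : ℕ) (S : Set Ω) :
    M.EIter G k (M.Eset G S) = M.EIter G (k + 1) S := by
  induction k with
  | zero => rfl
  | succ k ih => exact congrArg (M.Eset G) ih

lemma iInter_EIter_Eset_of_Eset_subset (M : EPS Ω Φ N) {G : Finset N} {T : Set Ω}
    (h : M.Eset G T ⊆ T) : ⋂ k, M.EIter G k (M.Eset G T) = ⋂ k, M.EIter G k T := by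
  simp only [EIter_Eset]
  refine (Set.subset_iInter fun k => ?_).antisymm
    (Set.subset_iInter fun k => Set.iInter_subset _ (k + 1))
  cases k with
  | zero => exact (Set.iInter_subset _ 0).trans h
  | succ k => exact Set.iInter_subset _ k

section SameFrames

variable (M : EPS Ω Φ N) (M' : EPS Ω Φ' N) (hpart : M'.part = M.part) (hmu : M'.mu = M.mu)
include hpart hmu

omit hpart in
lemma mval_eq_of_mu_eq : M'.mval = M.mval := by
  funext j ω S
  simp only [mval, hmu]

lemma Bset_eq_of_part_eq_of_mu_eq : M'.Bset = M.Bset := by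
  funext j S
  simp only [Bset, mval_eq_of_mu_eq M M' hmu, hpart]

lemma Eset_eq_of_part_eq_of_mu_eq : M'.Eset = M.Eset := by
  funext G S
  simp only [Eset, Bset_eq_of_part_eq_of_mu_eq M M' hpart hmu]

lemma EIter_eq_of_part_eq_of_mu_eq : M'.EIter = M.EIter := by
  funext G k
  induction k with
  | zero => rfl
  | succ k ih =>
    funext S
    simp only [EIter, ih, Eset_eq_of_part_eq_of_mu_eq M M' hpart hmu]

end SameFrames

lemma satOu_Bf (M : EPS Ω Φ N) (j : N) (φ : Formula Φ N) (i : N) :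
    M.satOu (Bf j φ) i = M.Bset j (M.satOu φ i) := by
  ext ω
  simp [Bf, satOu, M.mem_Bset_iff_one_le_toReal]

lemma satOu_bigAnd (M : EPS Ω Φ N) (l : List (Formula Φ N)) (i : N) :
    M.satOu (bigAnd l) i = ⋂ φ ∈ l, M.satOu φ i := by
  induction l with
  | nil => simp [bigAnd, satOu]
  | cons φ l ih => simp_all [bigAnd, satOu]

lemma satOu_bigAnd_map_Bf (M : EPS Ω Φ N) (G : Finset N) (φ : N → Formula Φ N) (i : N) :
    M.satOu (bigAnd (G.toList.map fun j => Bf j (φ j))) i =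
      ⋂ j ∈ G, M.Bset j (M.satOu (φ j) i) := by
  simp [satOu_bigAnd, satOu_Bf]

end EPS

open EPS in
lemma satOu_trIn {Ω Φ N : Type} (M : EPS Ω Φ N) (Mc : EPS Ω (Φ × N) N)
    (hpart : Mc.part = M.part) (hmu : Mc.mu = M.mu)
    (hinterp : Mc.interp = fun _ ω q => M.interp q.2 ω q.1) (φ : Formula Φ N) (i i₀ : N) :
    Mc.satOu (trIn i φ) i₀ = M.satIn φ i := by
  induction φ generalizing i with
  | tru => rfl
  | prim p => simp [trIn, satOu, satIn, hinterp]
  | neg φ ih => simp only [trIn, satOu, satIn, ih]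
  | and φ ψ ihφ ihψ => simp only [trIn, satOu, satIn, ihφ, ihψ]
  | prob j k a φs b ih => simp only [trIn, satOu, satIn, ih, hpart, mval_eq_of_mu_eq M Mc hmu]
  | cb G φ ih =>
    simp only [trIn, satOu, satIn, satOu_bigAnd_map_Bf, ih,
      Bset_eq_of_part_eq_of_mu_eq M Mc hpart hmu, Eset_eq_of_part_eq_of_mu_eq M Mc hpart hmu, EIter_eq_of_part_eq_of_mu_eq M Mc hpart hmu]
    exact M.iInter_EIter_Eset_of_Eset_subset (M.Eset_iInter_Bset_subset G _)

/-- Translation correctness for innermost scope (Theorem 2(a)): for every formula `φ`,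
state `ω`, and agent `i`, `(M,ω,i) ⊨^in φ` iff `(M_c,ω) ⊨ φ_i^in`, where `M_c` is the
corresponding common-interpretation structure over `Φ × N` with
`π(ω)(p,j) = π_j(ω)(p)`, and the standard semantics of `M_c` is rendered as `satOu`
at an arbitrary agent `i₀`. -/
theorem translation_correct_in
    {Ω Φ N : Type} (M : EPS Ω Φ N) (Mc : EPS Ω (Φ × N) N)
    (hpart : Mc.part = M.part) (hmu : Mc.mu = M.mu)
    (hinterp : Mc.interp = fun _ ω q => M.interp q.2 ω q.1) :
    ∀ (φ : Formula Φ N) (ω : Ω) (i i₀ : N),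
      ω ∈ M.satIn φ i ↔ ω ∈ Mc.satOu (trIn i φ) i₀ := by
  intro φ ω i i₀
  rw [satOu_trIn M Mc hpart hmu hinterp]
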